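/- The Zernike polynomials ψ_{j,k}(r,θ) = sqrt((|j|+2k+1)/π) · R^{|j|}_{|j|+2k}(r) · e^{i j θ}, for j ∈ ℤ and k ∈ ℕ, form an orthonormal family in L²(D) on the unit disk D ⊂ ℝ², where the inner product is ∫_0^1 ∫_0^{2π} ψ_{j,k} conj(ψ_{j',k'}) r dθ dr. That is, ⟨ψ_{j,k}, ψ_{j',k'}⟩ = 1 if (j,k) = (j',k') and 0 otherwise. -/

import Mathlib

open Complex Real MeasureTheory ComplexConjugate

/-- The Zernike radial function `R^{j}_{j+2k}`. -/
noncomputable def zernikeR (j k : ℕ) (r : ℝ) : ℝ :=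
  ∑ i ∈ Finset.range (k + 1),
    (-1 : ℝ) ^ i * (Nat.choose (j + 2 * k - i) i) *
      (Nat.choose (j + 2 * k - 2 * i) (k - i)) * r ^ (j + 2 * k - 2 * i)

/-- The Zernike polynomial `ψ_{j,k}` in polar coordinates. -/
noncomputable def zernikePsi (j : ℤ) (k : ℕ) (r θ : ℝ) : ℂ :=
  (Real.sqrt ((j.natAbs + 2 * k + 1) / π) : ℝ) * (zernikeR j.natAbs k r : ℝ) *
    Complex.exp (Complex.I * j * θ)

/-!
Reindexed by `j = k - i`, `R^m_{m+2k}(r) = ∑_{j ≤ k} (-1)^(k-j) C(k,j) (j+m+1)⁽ᵏ⁾ / k! · r^(m+2j)`,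
where `x⁽ᵏ⁾` is the rising factorial. Hence the moment `∫₀¹ R^m_{m+2k}(r) r^(m+2l) r dr` is
`1/(2 k!)` times the `k`-th forward difference at `0` of `x ↦ (x+m+1)⁽ᵏ⁾ / (x+m+l+1)`. Dividing the
numerator by `x + m + l + 1` leaves a polynomial of degree `< k`, which the difference kills, and the
term `(-l)⁽ᵏ⁾ / (x+m+l+1)`, whose differences are explicit. So the moment vanishes for `l < k`, which
gives radial orthogonality, and for `l = k` it gives the norm. The angular integral of
`e^{i(j-j')θ}` separates `j ≠ j'`.
-/

open Finset Polynomial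
open scoped fwdDiff Nat

section ForwardDifference

theorem fwdDiff_iter_congr {M G : Type*} [AddCommMonoid M] [AddCommGroup G] {h : M}
    {f g : M → G} {y : M} {n : ℕ} (hfg : ∀ i ≤ n, f (y + i • h) = g (y + i • h)) :
    Δ_[h] ^[n] f y = Δ_[h] ^[n] g y := by
  simp only [fwdDiff_iter_eq_sum_shift]
  exact sum_congr rfl fun i hi => by rw [hfg i (Nat.lt_succ_iff.mp (mem_range.mp hi))]

theorem fwdDiff_iter_apply_zero_eq_sum {R : Type*} [CommRing R] (f : R → R) (n : ℕ) :
    Δ_[1] ^[n] f 0 = ∑ j ∈ range (n + 1), (-1) ^ (n - j) * n.choose j * f j := by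
  simp [fwdDiff_iter_eq_sum_shift, zsmul_eq_mul]

theorem Polynomial.fwdDiff_iter_eq_zero_of_degree_lt' {R : Type*} [CommRing R] {P : R[X]}
    {n : ℕ} (hP : P.degree < n) : Δ_[1] ^[n] P.eval = 0 := by
  rcases eq_or_ne P 0 with rfl | hP0
  · rw [show (0 : R[X]).eval = 0 by ext; simp, ← fwdDiff_aux.coe_fwdDiffₗ_pow, map_zero]
  · exact fwdDiff_iter_eq_zero_of_degree_lt ((natDegree_lt_iff_degree_lt hP0).2 hP)

variable {K : Type*} [Field K] [LinearOrder K] [IsStrictOrderedRing K]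

theorem fwdDiff_iter_one_div_add (k : ℕ) {b : K} (hb : 0 < b) :
    Δ_[1] ^[k] (fun x : K => 1 / (x + b)) 0 =
      (-1) ^ k * k ! / (ascPochhammer K (k + 1)).eval b := by
  induction k generalizing b with
  | zero => simp
  | succ k ih =>
    have hstep : Δ_[1] (fun x : K => 1 / (x + b)) =
        (fun x => 1 / (x + (b + 1))) - fun x => 1 / (x + b) := by
      funext x; simp only [fwdDiff, Pi.sub_apply]; ring_nf
    have hleft : (ascPochhammer K (k + 2)).eval b =
        b * (ascPochhammer K (k + 1)).eval (b + 1) := by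
      rw [ascPochhammer_succ_left, eval_mul, eval_X, eval_comp, eval_add, eval_X, eval_one]
    have hright : (ascPochhammer K (k + 2)).eval b =
        (ascPochhammer K (k + 1)).eval b * (b + (k + 1 : ℕ)) :=
      ascPochhammer_succ_eval _ _
    have h₀ := ascPochhammer_pos (k + 1) b hb
    have h₁ := ascPochhammer_pos (k + 1) (b + 1) (by linarith)
    rw [Function.iterate_succ_apply, hstep, ← fwdDiff_aux.coe_fwdDiffₗ_pow, map_sub,
      Pi.sub_apply, fwdDiff_aux.coe_fwdDiffₗ_pow, ih (by linarith), ih hb,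
      show k + 1 + 1 = k + 2 from rfl, div_sub_div _ _ h₁.ne' h₀.ne',
      div_eq_div_iff (by positivity) (ascPochhammer_pos _ b hb).ne']
    push_cast [Nat.factorial_succ] at hright ⊢
    linear_combination ((-1) ^ k * k ! * (ascPochhammer K (k + 1)).eval b) * hleft
      - ((-1) ^ k * k ! * (ascPochhammer K (k + 1)).eval (b + 1)) * hright

theorem fwdDiff_iter_eval_div_add {k : ℕ} {P : K[X]} (hP : P.natDegree ≤ k) {b : K}
    (hb : 0 < b) :
    Δ_[1] ^[k] (fun x => P.eval x / (x + b)) 0 =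
      P.eval (-b) * Δ_[1] ^[k] (fun x : K => 1 / (x + b)) 0 := by
  set Q := P /ₘ (X - C (-b))
  have hdiv (x : K) : P.eval x = (x + b) * Q.eval x + P.eval (-b) := by
    have h := modByMonic_add_div P (X - C (-b))
    rw [modByMonic_X_sub_C_eq_C_eval] at h
    nth_rewrite 1 [← h]
    simp only [eval_add, eval_C, eval_mul, eval_sub, eval_X]
    ring
  have hQ : Q.degree < k := by
    rcases eq_or_ne P 0 with rfl | hP0
    · simp [Q]
    · exact (degree_divByMonic_lt _ _ hP0 (by simp)).trans_le (degree_le_of_natDegree_le hP)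
  -- the decomposition fails at `x = -b` (where `P(x)/(x+b)` is the junk value `0`),
  -- but only the values at `0, …, k` enter
  have hsplit : Δ_[1] ^[k] (fun x => P.eval x / (x + b)) 0 =
      Δ_[1] ^[k] (Q.eval + P.eval (-b) • fun x : K => 1 / (x + b)) 0 := by
    refine fwdDiff_iter_congr fun i _ => ?_
    have : (0 : K) + i • (1 : K) + b ≠ 0 := by simp; positivity
    rw [Pi.add_apply, Pi.smul_apply, smul_eq_mul, hdiv]
    field_simp
  rw [hsplit, fwdDiff_iter_add, fwdDiff_iter_const_smul, fwdDiff_iter_eq_zero_of_degree_lt' hQ]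
  simp

end ForwardDifference

theorem ascPochhammer_eval_neg_self {R : Type*} [CommRing R] (k : ℕ) :
    (ascPochhammer R k).eval (-(k : R)) = (-1) ^ k * k ! := by
  rw [ascPochhammer_eval_neg_eq_descPochhammer, descPochhammer_eval_eq_descFactorial,
    Nat.descFactorial_self]

theorem cast_choose_mul_choose_eq_ascPochhammer (m k j : ℕ) (hj : j ≤ k) :
    ((m + k + j).choose (k - j) * (m + 2 * j).choose j : ℝ) =
      k.choose j * (ascPochhammer ℝ k).eval ((j : ℝ) + (m + 1)) / k ! := by
  have hasc : (m + j)! * (ascPochhammer ℝ k).eval ((j : ℝ) + (m + 1)) = (m + j + k)! := by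
    rw [show (j : ℝ) + (m + 1) = ((m + j + 1 : ℕ) : ℝ) by push_cast; ring,
      ascPochhammer_nat_eq_natCast_ascFactorial, ← Nat.cast_mul, Nat.factorial_mul_ascFactorial]
  rw [Nat.cast_choose ℝ (show k - j ≤ m + k + j by omega),
    Nat.cast_choose ℝ (show j ≤ m + 2 * j by omega), Nat.cast_choose ℝ hj,
    show m + k + j - (k - j) = m + 2 * j by omega, show m + 2 * j - j = m + j by omega,
    show m + k + j = m + j + k by ring, ← hasc]
  field_simp

theorem zernikeR_eq_sum (m k : ℕ) (r : ℝ) :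
    zernikeR m k r = ∑ j ∈ range (k + 1),
      (-1) ^ (k - j) * k.choose j * (ascPochhammer ℝ k).eval ((j : ℝ) + (m + 1)) / k ! *
        r ^ (m + 2 * j) := by
  rw [zernikeR, ← sum_range_reflect]
  refine sum_congr rfl fun j hj => ?_
  have hj : j ≤ k := Nat.lt_succ_iff.mp (mem_range.mp hj)
  rw [show k + 1 - 1 - j = k - j by omega, show m + 2 * k - (k - j) = m + k + j by omega,
    show m + 2 * k - 2 * (k - j) = m + 2 * j by omega, show k - (k - j) = j by omega,
    mul_assoc ((-1 : ℝ) ^ (k - j)), cast_choose_mul_choose_eq_ascPochhammer m k j hj]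
  ring

theorem integral_zernikeR_mul_pow (m k l : ℕ) :
    ∫ r in (0 : ℝ)..1, zernikeR m k r * r ^ (m + 2 * l + 1) =
      (ascPochhammer ℝ k).eval (-(l : ℝ)) * (-1) ^ k /
        (2 * (ascPochhammer ℝ (k + 1)).eval ((m + l + 1 : ℝ))) := by
  set b : ℝ := m + l + 1
  have hb : 0 < b := by positivity
  set P : ℝ[X] := (ascPochhammer ℝ k).comp (X + C ((m : ℝ) + 1))
  have hP : P.natDegree ≤ k := by
    rw [natDegree_comp, natDegree_X_add_C, ascPochhammer_natDegree, mul_one]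
  have hterm (j : ℕ) : ∫ r in (0 : ℝ)..1,
      (-1) ^ (k - j) * k.choose j * (ascPochhammer ℝ k).eval ((j : ℝ) + (m + 1)) / k ! *
        r ^ (m + 2 * j) * r ^ (m + 2 * l + 1) =
      (-1) ^ (k - j) * k.choose j * (P.eval (j : ℝ) / (j + b)) / (2 * k !) := by
    simp_rw [mul_assoc _ (_ ^ _), ← pow_add]
    rw [intervalIntegral.integral_const_mul, integral_pow]
    simp only [P, b, eval_comp, eval_add, eval_X, eval_C]
    field_simp
    push_cast
    ring
  have hPb : P.eval (-b) = (ascPochhammer ℝ k).eval (-(l : ℝ)) := by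
    simp only [P, b, eval_comp, eval_add, eval_X, eval_C]; ring_nf
  simp_rw [zernikeR_eq_sum, sum_mul]
  rw [intervalIntegral.integral_finsetSum fun j _ => by
    apply Continuous.intervalIntegrable; fun_prop]
  simp_rw [hterm, ← sum_div]
  rw [← fwdDiff_iter_apply_zero_eq_sum (fun x => P.eval x / (x + b)),
    fwdDiff_iter_eval_div_add hP hb, fwdDiff_iter_one_div_add k hb, hPb]
  field_simp

theorem integral_zernikeR_mul_zernikeR_of_le (m : ℕ) {k k' : ℕ} (hk : k' ≤ k) :
    ∫ r in (0 : ℝ)..1, zernikeR m k r * zernikeR m k' r * r =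
      if k = k' then 1 / (2 * ((m : ℝ) + 2 * k + 1)) else 0 := by
  have hexpand (r : ℝ) : zernikeR m k r * zernikeR m k' r * r = ∑ l ∈ range (k' + 1),
      (-1) ^ (k' - l) * k'.choose l * (ascPochhammer ℝ k').eval ((l : ℝ) + (m + 1)) / k' ! *
        (zernikeR m k r * r ^ (m + 2 * l + 1)) := by
    rw [zernikeR_eq_sum m k', mul_sum, sum_mul]
    exact sum_congr rfl fun l _ => by ring
  have hlower (l : ℕ) (hl : l < k) :
      ∫ r in (0 : ℝ)..1, zernikeR m k r * r ^ (m + 2 * l + 1) = 0 := by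
    rw [integral_zernikeR_mul_pow, ascPochhammer_eval_neg_coe_nat_of_lt hl, zero_mul, zero_div]
  simp_rw [hexpand]
  rw [intervalIntegral.integral_finsetSum fun l _ => by
    apply Continuous.intervalIntegrable; unfold zernikeR; fun_prop]
  simp_rw [intervalIntegral.integral_const_mul]
  rcases hk.lt_or_eq with hlt | rfl
  · rw [if_neg hlt.ne']
    refine sum_eq_zero fun l hl => ?_
    rw [hlower l (by have := mem_range.mp hl; omega), mul_zero]
  · rw [if_pos rfl, sum_range_succ,
      sum_eq_zero fun l hl => by rw [hlower l (mem_range.mp hl), mul_zero], zero_add,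
      integral_zernikeR_mul_pow, ascPochhammer_eval_neg_self, ascPochhammer_succ_eval]
    have hpos := ascPochhammer_pos k' ((m : ℝ) + k' + 1) (by positivity)
    have hsq : ((-1 : ℝ) ^ k') * (-1) ^ k' = 1 := by rw [← mul_pow]; norm_num
    rw [Nat.sub_self, pow_zero, Nat.choose_self, Nat.cast_one,
      show (k' : ℝ) + (m + 1) = m + k' + 1 by ring]
    field_simp
    linear_combination ((m : ℝ) + 2 * k' + 1) * hsq

theorem integral_zernikeR_mul_zernikeR (m k k' : ℕ) :
    ∫ r in (0 : ℝ)..1, zernikeR m k r * zernikeR m k' r * r =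
      if k = k' then 1 / (2 * ((m : ℝ) + 2 * k + 1)) else 0 := by
  rcases le_total k' k with h | h
  · exact integral_zernikeR_mul_zernikeR_of_le m h
  · simp_rw [mul_comm (zernikeR m k _)]
    rw [integral_zernikeR_mul_zernikeR_of_le m h]
    rcases h.lt_or_eq with h | rfl
    · rw [if_neg h.ne', if_neg h.ne]
    · rfl

theorem integral_exp_int_mul_I (n : ℤ) :
    ∫ θ in (0 : ℝ)..2 * π, exp (I * n * θ) = if n = 0 then (2 * π : ℂ) else 0 := by
  split_ifs with hn
  · simp [hn]
  · have hc : I * n ≠ 0 := mul_ne_zero I_ne_zero (Int.cast_ne_zero.mpr hn)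
    have hperiod : exp (I * n * ((2 * π : ℝ) : ℂ)) = 1 := by
      rw [← exp_int_mul_two_pi_mul_I n]; push_cast; ring_nf
    rw [integral_exp_mul_complex hc, hperiod]
    simp

theorem zernikePsi_mul_conj (j j' : ℤ) (k k' : ℕ) (r θ : ℝ) :
    zernikePsi j k r θ * conj (zernikePsi j' k' r θ) =
      ((√((j.natAbs + 2 * k + 1) / π) * √((j'.natAbs + 2 * k' + 1) / π) *
        (zernikeR j.natAbs k r * zernikeR j'.natAbs k' r) : ℝ) : ℂ) *
        exp (I * (j - j' : ℤ) * θ) := by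
  simp only [zernikePsi, map_mul, conj_ofReal, ← exp_conj, conj_I, map_intCast]
  rw [show I * ((j - j' : ℤ) : ℂ) * θ = I * j * θ + -I * j' * θ by push_cast; ring,
    Complex.exp_add]
  push_cast
  ring

/-- The Zernike polynomials form an orthonormal family in `L²(D)` with respect to the
polar-coordinate inner product `∫_0^1 ∫_0^{2π} ψ_{j,k} conj(ψ_{j',k'}) r dθ dr`. -/
theorem zernike_orthonormal (j j' : ℤ) (k k' : ℕ) :
    (∫ r in (0:ℝ)..1, (∫ θ in (0:ℝ)..(2 * π),
        zernikePsi j k r θ * conj (zernikePsi j' k' r θ)) * (r : ℂ)) =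
      if j = j' ∧ k = k' then 1 else 0 := by
  simp_rw [zernikePsi_mul_conj, intervalIntegral.integral_const_mul, integral_exp_int_mul_I,
    sub_eq_zero]
  by_cases hj : j = j'
  · subst hj
    set m := j.natAbs
    have hintegrand (r : ℝ) : ((√((m + 2 * k + 1) / π) * √((m + 2 * k' + 1) / π) *
        (zernikeR m k r * zernikeR m k' r) : ℝ) : ℂ) * (2 * π) * r =
        ((2 * π * (√((m + 2 * k + 1) / π) * √((m + 2 * k' + 1) / π)) *
          (zernikeR m k r * zernikeR m k' r * r) : ℝ) : ℂ) := by
      push_cast; ring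
    simp only [true_and, ↓reduceIte, hintegrand]
    rw [intervalIntegral.integral_ofReal, intervalIntegral.integral_const_mul,
      integral_zernikeR_mul_zernikeR]
    split_ifs with hk
    · subst hk
      rw [Real.mul_self_sqrt (by positivity)]
      field_simp
      exact ofReal_one
    · rw [mul_zero, ofReal_zero]
  · simp [hj]
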